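/- Let G be a connected graph with δ(G) ≥ 4 and at least 5 vertices, embeddable on a surface M whose Euler characteristic χ is as large as possible, with girth g(G) = g < ∞. Then b_tr(G) ≤ (4g/(g−2))(1 − χ/|V(G)|) + Δ(G) − 4 ≤ −12χ/|V(G)| + Δ(G) + 8. -/

import Mathlib

open SimpleGraph Finset

variable {V : Type*} [Fintype V] [DecidableEq V]

/-- The number of orbits (cycles together with fixed points) of a permutation of a finite type. -/
noncomputable def permNumOrbits {α : Type*} [Fintype α] [DecidableEq α] (ψ : Equiv.Perm α) : ℕ :=
  Multiset.card ψ.cycleType + (Finset.univ.filter fun a => ψ a = a).card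

/-- A combinatorial (2-cell) embedding scheme of a graph on a surface:
a rotation system together with an edge signature (Mohar–Thomassen). -/
structure SimpleGraph.EmbeddingScheme (G : SimpleGraph V) [DecidableRel G.Adj] where
  rot : Equiv.Perm G.Dart
  rot_fst : ∀ d : G.Dart, (rot d).toProd.1 = d.toProd.1
  rot_cyclic : ∀ d e : G.Dart, d.toProd.1 = e.toProd.1 → ∃ k : ℕ, (rot ^ k) d = e
  sign : G.Dart → ℤˣ
  sign_symm : ∀ d : G.Dart, sign d.symm = sign d

namespace SimpleGraph.EmbeddingScheme

variable {G : SimpleGraph V} [DecidableRel G.Adj] (S : G.EmbeddingScheme)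

def swapPerm : Equiv.Perm (G.Dart × ℤˣ) :=
  Function.Involutive.toPerm (fun p => (p.1.symm, p.2 * S.sign p.1)) (by
    intro p
    simp [SimpleGraph.Dart.symm_symm, S.sign_symm p.1, mul_assoc, Int.units_mul_self])

def rotPerm : Equiv.Perm (G.Dart × ℤˣ) where
  toFun p := ((S.rot ^ (p.2 : ℤ)) p.1, p.2)
  invFun p := ((S.rot ^ (-(p.2 : ℤ))) p.1, p.2)
  left_inv p := by
    simp [← Equiv.Perm.mul_apply, ← zpow_add]
  right_inv p := by
    show ((S.rot ^ (p.2 : ℤ)) ((S.rot ^ (-(p.2 : ℤ))) p.1), p.2) = p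
    rw [← Equiv.Perm.mul_apply, ← zpow_add]
    simp

/-- The face-tracing permutation on signed darts. -/
def faceMap : Equiv.Perm (G.Dart × ℤˣ) := S.swapPerm.trans S.rotPerm

/-- Each face is traced by exactly two orbits of the face-tracing permutation. -/
noncomputable def numFaces : ℕ := permNumOrbits S.faceMap / 2

/-- The Euler characteristic of the closed surface determined by the scheme. -/
noncomputable def eulerChar : ℤ :=
  (Fintype.card V : ℤ) - (G.edgeFinset.card : ℤ) + (S.numFaces : ℤ)

/-- The scheme describes an embedding on an orientable surface iff its signature
is switching-equivalent to the all-positive signature. -/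
def IsOrientable : Prop := ∃ θ : V → ℤˣ, ∀ d : G.Dart, S.sign d = θ d.toProd.1 * θ d.toProd.2

end SimpleGraph.EmbeddingScheme

/-- `G` has orientable genus `g`. -/
def SimpleGraph.HasOrientableGenus (G : SimpleGraph V) [DecidableRel G.Adj] (g : ℕ) : Prop :=
  (∃ S : G.EmbeddingScheme, S.IsOrientable ∧ S.eulerChar = 2 - 2 * (g : ℤ)) ∧
  ∀ g' : ℕ, g' < g → ¬ ∃ S : G.EmbeddingScheme, S.IsOrientable ∧ S.eulerChar = 2 - 2 * (g' : ℤ)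

/-- `G` has nonorientable genus `k`. -/
def SimpleGraph.HasNonorientableGenus (G : SimpleGraph V) [DecidableRel G.Adj] (k : ℕ) : Prop :=
  (∃ S : G.EmbeddingScheme, ¬ S.IsOrientable ∧ S.eulerChar = 2 - (k : ℤ)) ∧
  ∀ k' : ℕ, k' < k → ¬ ∃ S : G.EmbeddingScheme, ¬ S.IsOrientable ∧ S.eulerChar = 2 - (k' : ℤ)

/-- `G` is planar: every component embeds in the sphere. -/
def SimpleGraph.IsPlanar (G : SimpleGraph V) [DecidableRel G.Adj] : Prop :=
  ∃ S : G.EmbeddingScheme, S.IsOrientable ∧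
    S.eulerChar = 2 * (Nat.card G.ConnectedComponent : ℤ)

/-- `S` is a total dominating set: every vertex has a neighbour in `S`. -/
def SimpleGraph.IsTotalDominatingSet (G : SimpleGraph V) (S : Finset V) : Prop :=
  ∀ v : V, ∃ u ∈ S, G.Adj u v

noncomputable def SimpleGraph.totalDominationNumber (G : SimpleGraph V) : ℕ :=
  sInf {k : ℕ | ∃ S : Finset V, G.IsTotalDominatingSet S ∧ S.card = k}

/-- The spanning subgraph of `G` keeping only edges meeting `S`. -/
def SimpleGraph.weakSubgraph (G : SimpleGraph V) (S : Finset V) : SimpleGraph V where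
  Adj u v := G.Adj u v ∧ (u ∈ S ∨ v ∈ S)
  symm := ⟨fun u v h => ⟨h.1.symm, h.2.symm⟩⟩
  loopless := ⟨fun v h => G.loopless.irrefl v h.1⟩

/-- `S` is a weakly connected dominating set. -/
def SimpleGraph.IsWeaklyConnectedDominatingSet (G : SimpleGraph V) (S : Finset V) : Prop :=
  S.Nonempty ∧ (G.weakSubgraph S).Connected

noncomputable def SimpleGraph.weaklyConnectedDominationNumber (G : SimpleGraph V) : ℕ :=
  sInf {k : ℕ | ∃ S : Finset V, G.IsWeaklyConnectedDominatingSet S ∧ S.card = k}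

/-- `S` is a connected dominating set. -/
def SimpleGraph.IsConnectedDominatingSet (G : SimpleGraph V) (S : Finset V) : Prop :=
  (∀ v ∉ S, ∃ u ∈ S, G.Adj u v) ∧ (G.induce (S : Set V)).Connected

noncomputable def SimpleGraph.connectedDominationNumber (G : SimpleGraph V) : ℕ :=
  sInf {k : ℕ | ∃ S : Finset V, G.IsConnectedDominatingSet S ∧ S.card = k}

/-- `S` is a restrained dominating set. -/
def SimpleGraph.IsRestrainedDominatingSet (G : SimpleGraph V) (S : Finset V) : Prop :=
  ∀ v ∉ S, (∃ u ∈ S, G.Adj u v) ∧ (∃ w ∉ S, G.Adj w v)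

noncomputable def SimpleGraph.restrainedDominationNumber (G : SimpleGraph V) : ℕ :=
  sInf {k : ℕ | ∃ S : Finset V, G.IsRestrainedDominatingSet S ∧ S.card = k}

/-- The restrained bondage number. -/
noncomputable def SimpleGraph.restrainedBondageNumber (G : SimpleGraph V) : ℕ :=
  sInf {k : ℕ | ∃ F : Finset (Sym2 V), ↑F ⊆ G.edgeSet ∧ F.card = k ∧
    G.restrainedDominationNumber < (G.deleteEdges ↑F).restrainedDominationNumber}

/-- `S` is a total restrained dominating set. -/
def SimpleGraph.IsTotalRestrainedDominatingSet (G : SimpleGraph V) (S : Finset V) : Prop :=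
  (∀ v : V, ∃ u ∈ S, G.Adj u v) ∧ ∀ v ∉ S, ∃ w ∉ S, G.Adj w v

noncomputable def SimpleGraph.totalRestrainedDominationNumber (G : SimpleGraph V) : ℕ :=
  sInf {k : ℕ | ∃ S : Finset V, G.IsTotalRestrainedDominatingSet S ∧ S.card = k}

/-- The total restrained bondage number (`⊤` if no suitable edge set exists). -/
noncomputable def SimpleGraph.totalRestrainedBondageNumber (G : SimpleGraph V) : ℕ∞ :=
  sInf {k : ℕ∞ | ∃ F : Finset (Sym2 V), ↑F ⊆ G.edgeSet ∧ (F.card : ℕ∞) = k ∧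
    (∀ v : V, ∃ u : V, (G.deleteEdges ↑F).Adj u v) ∧
    G.totalRestrainedDominationNumber < (G.deleteEdges ↑F).totalRestrainedDominationNumber}

/-- Roman dominating function. -/
def SimpleGraph.IsRomanDominatingFunction (G : SimpleGraph V) (f : V → ℕ) : Prop :=
  (∀ v : V, f v ≤ 2) ∧ ∀ v : V, f v = 0 → ∃ u : V, G.Adj u v ∧ f u = 2

noncomputable def SimpleGraph.romanDominationNumber (G : SimpleGraph V) : ℕ :=
  sInf {k : ℕ | ∃ f : V → ℕ, G.IsRomanDominatingFunction f ∧ ∑ v : V, f v = k}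

noncomputable def SimpleGraph.romanBondageNumber (G : SimpleGraph V) : ℕ :=
  sInf {k : ℕ | ∃ F : Finset (Sym2 V), ↑F ⊆ G.edgeSet ∧ F.card = k ∧
    G.romanDominationNumber < (G.deleteEdges ↑F).romanDominationNumber}

/-- The minimum edge-degree `ξ(G)`. -/
noncomputable def SimpleGraph.minEdgeDegree (G : SimpleGraph V) [DecidableRel G.Adj] : ℕ :=
  sInf {k : ℕ | ∃ d : G.Dart, G.degree d.toProd.1 + G.degree d.toProd.2 - 2 = k}

/-- A restricted edge-cut: removing it disconnects `G` leaving no isolated vertex. -/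
def SimpleGraph.IsRestrictedEdgeCut (G : SimpleGraph V) (F : Finset (Sym2 V)) : Prop :=
  ↑F ⊆ G.edgeSet ∧ ¬ (G.deleteEdges ↑F).Connected ∧
    ∀ v : V, ∃ u : V, (G.deleteEdges ↑F).Adj u v

/-- The restricted edge-connectivity `λ'(G)`. -/
noncomputable def SimpleGraph.restrictedEdgeConnectivity (G : SimpleGraph V) : ℕ :=
  sInf {k : ℕ | ∃ F : Finset (Sym2 V), G.IsRestrictedEdgeCut F ∧ F.card = k}

/-- `G` is a star: all edges share a common vertex. -/
def SimpleGraph.IsStar (G : SimpleGraph V) : Prop :=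
  ∃ c : V, ∀ e ∈ G.edgeSet, c ∈ e

/-- The average degree `2|E|/|V|` of `G`. -/
noncomputable def SimpleGraph.averageDegree (G : SimpleGraph V) [DecidableRel G.Adj] : ℝ :=
  2 * (G.edgeFinset.card : ℝ) / (Fintype.card V : ℝ)

def h1 (x : ℕ) : ℕ := if x ≤ 3 then 2 * x + 13 else 4 * x + 7
def h2 (x : ℕ) : ℕ := if x = 0 then 8 else 4 * x + 5
def k1 (x : ℕ) : ℕ := if x ≤ 2 then 2 * x + 11 else if x ≤ 5 then 2 * x + 9 else 2 * x + 7
def k2 (x : ℕ) : ℕ := if x = 1 then 8 else 2 * x + 5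

/-!
Deleting every edge at a path `v u v'` except its own two edges leaves the path as a component,
and no vertex isolated when `δ(G) ≥ 4`. A total restrained dominating set of the new graph must
contain `u`, `v` and `v'`; dropping `v`, or `v'`, or both `u` and `v'` turns it into a smaller
one of `G`. Hence `b_tr(G) ≤ d(u) + d(v) + d(v') - 4`, and a discharging argument against the
average degree `t` finds such a path with `d(u) + d(v) + d(v') ≤ 2t + Δ(G)`.

For the embedding, the boundary of each face is a closed walk that never immediately backtracks,
so it contains a cycle and has length at least the girth `g`. Thus `g f ≤ 2m`, and Euler's
formula `χ = n - m + f` turns this into Samodivkin's bound `t ≤ (2g / (g - 2)) (1 - χ / n)`.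
Finally `4g / (g - 2) ≤ 12` because `g ≥ 3`.
-/

lemma Finset.sum_add_sum_le_sum_of_pairwiseDisjoint {ι β : Type*} [Fintype ι] [DecidableEq ι]
    [AddCommMonoid β] [PartialOrder β] [IsOrderedAddMonoid β] {f : ι → β} {L : Finset ι}
    {H : ι → Finset ι} (hH : (L : Set ι).PairwiseDisjoint H) (hLH : ∀ w ∈ L, Disjoint L (H w))
    (hf : ∀ i ∉ L, 0 ≤ f i) :
    ∑ w ∈ L, (f w + ∑ y ∈ H w, f y) ≤ ∑ i, f i := by
  rw [sum_add_distrib, ← sum_biUnion hH, ← sum_union (disjoint_biUnion_right _ _ _ |>.mpr hLH)]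
  exact sum_le_sum_of_subset_of_nonneg (subset_univ _)
    fun i _ hi => hf i fun h => hi (mem_union_left _ h)

lemma Equiv.Perm.exists_pow_apply_eq_self_of_mem_cycleType {α : Type*} [Fintype α]
    [DecidableEq α] {σ : Equiv.Perm α} {n : ℕ} (hn : n ∈ σ.cycleType) :
    ∃ x, σ x ≠ x ∧ (σ ^ n) x = x := by
  rw [Equiv.Perm.cycleType_def, Multiset.mem_map] at hn
  obtain ⟨c, hc, rfl⟩ := hn
  have hc : c ∈ σ.cycleFactorsFinset := hc
  obtain ⟨x, hx⟩ := (Equiv.Perm.mem_cycleFactorsFinset_iff.mp hc).1.nonempty_support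
  obtain rfl := Equiv.Perm.cycle_is_cycleOf hx hc
  refine ⟨x, Equiv.Perm.mem_support.mp (Equiv.Perm.mem_support_cycleOf_iff.mp hx).2, ?_⟩
  simpa using (σ.pow_mod_card_support_cycleOf_self_apply #(σ.cycleOf x).support x).symm

namespace SimpleGraph

section SeqWalk

variable {V : Type*} {G : SimpleGraph V}

def seqWalk (a : ℕ → V) (ha : ∀ i, G.Adj (a i) (a (i + 1))) :
    (i n : ℕ) → G.Walk (a i) (a (i + n))
  | _, 0 => .nil
  | i, n + 1 =>
    .cons (ha i) ((seqWalk a ha (i + 1) n).copy rfl (congrArg a (Nat.add_right_comm i 1 n)))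

lemma support_seqWalk (a : ℕ → V) (ha : ∀ i, G.Adj (a i) (a (i + 1))) (i n : ℕ) :
    (seqWalk a ha i n).support = (List.range (n + 1)).map (fun j => a (i + j)) := by
  induction n generalizing i with
  | zero => simp [seqWalk]
  | succ n ih =>
    rw [seqWalk, Walk.support_cons, Walk.support_copy, ih, List.range_succ_eq_map (n := n + 1)]
    simp only [List.map_cons, List.map_map, Nat.add_zero]
    congr 2
    funext j
    simp only [Function.comp_apply]
    congr 1
    omega

lemma length_seqWalk (a : ℕ → V) (ha : ∀ i, G.Adj (a i) (a (i + 1))) (i n : ℕ) :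
    (seqWalk a ha i n).length = n := by
  induction n generalizing i with
  | zero => rfl
  | succ n ih => simp [seqWalk, ih]

lemma exists_isCycle_of_seq {a : ℕ → V} (ha : ∀ i, G.Adj (a i) (a (i + 1))) {i q : ℕ}
    (hq : 3 ≤ q) (hclose : a (i + q) = a i) (hne : ∀ j d, 0 < d → d < q → a (j + d) ≠ a j) :
    ∃ c : G.Walk (a i) (a i), c.IsCycle ∧ c.length = q := by
  set c := (seqWalk a ha i q).copy rfl hclose
  have hlen : c.length = q := by simp [c, length_seqWalk]
  refine ⟨c, Walk.isCycle_iff_isPath_tail_and_le_length.mpr ⟨?_, hlen ▸ hq⟩, hlen⟩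
  have hnil : ¬ c.Nil := by
    rw [← Walk.length_eq_zero_iff, hlen]
    omega
  rw [Walk.isPath_def, Walk.support_tail_of_not_nil _ hnil, Walk.support_copy, support_seqWalk,
    List.range_succ_eq_map, List.map_cons, List.tail_cons, List.map_map]
  refine List.nodup_range.map_on fun j hj k hk hjk => ?_
  simp only [List.mem_range, Function.comp_apply] at hj hk hjk
  by_contra hjk'
  rcases Nat.lt_or_gt_of_ne hjk' with h | h
  · exact hne (i + j.succ) (k - j) (by omega) (by omega) (by rw [hjk]; congr 1; omega)
  · exact hne (i + k.succ) (j - k) (by omega) (by omega) (by rw [← hjk]; congr 1; omega)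

lemma exists_isCycle_length_le_of_seq {a : ℕ → V} (ha : ∀ i, G.Adj (a i) (a (i + 1)))
    (hnb : ∀ i, a (i + 2) ≠ a i) {ℓ : ℕ} (hℓ : 0 < ℓ) (hper : a ℓ = a 0) :
    ∃ (x : V) (c : G.Walk x x), c.IsCycle ∧ c.length ≤ ℓ := by
  classical
  have hrep : ∃ q, 0 < q ∧ ∃ j, a (j + q) = a j := ⟨ℓ, hℓ, 0, by rwa [Nat.zero_add]⟩
  obtain ⟨hq, j, hj⟩ := Nat.find_spec hrep
  have hmin : ∀ j d, 0 < d → d < Nat.find hrep → a (j + d) ≠ a j :=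
    fun j d hd hlt h => Nat.find_min hrep hlt ⟨hd, j, h⟩
  have h1 : Nat.find hrep ≠ 1 := fun h => (ha j).ne (h ▸ hj).symm
  have h2 : Nat.find hrep ≠ 2 := fun h => hnb j (h ▸ hj)
  obtain ⟨c, hc, hlen⟩ := exists_isCycle_of_seq ha (by omega) hj hmin
  exact ⟨a j, c, hc, hlen ▸ Nat.find_min' hrep ⟨hℓ, 0, by rwa [Nat.zero_add]⟩⟩

end SeqWalk

end SimpleGraph

namespace SimpleGraph.EmbeddingScheme

variable {V : Type*} {G : SimpleGraph V} [DecidableRel G.Adj]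

lemma rot_zpow_fst (S : G.EmbeddingScheme) (k : ℤ) (d : G.Dart) :
    ((S.rot ^ k) d).fst = d.fst := by
  induction k using Int.induction_on generalizing d with
  | zero => rfl
  | succ k ih => rw [zpow_add_one, Equiv.Perm.mul_apply, ih, S.rot_fst]
  | pred k ih =>
    rw [zpow_sub_one, Equiv.Perm.mul_apply, ih, ← S.rot_fst (S.rot⁻¹ d),
      ← Equiv.Perm.mul_apply, mul_inv_cancel, Equiv.Perm.one_apply]

lemma rot_apply_ne [Fintype V] (S : G.EmbeddingScheme) {d : G.Dart} (hd : 2 ≤ G.degree d.fst) :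
    S.rot d ≠ d := by
  obtain ⟨y, hy, hyd⟩ := Finset.exists_mem_ne (by rwa [G.card_neighborFinset_eq_degree]) d.snd
  obtain ⟨k, hk⟩ := S.rot_cyclic d ⟨(d.fst, y), (mem_neighborFinset _ _ _).mp hy⟩ rfl
  intro hfix
  rw [Equiv.Perm.pow_apply_eq_self_of_apply_eq_self hfix] at hk
  exact hyd (congrArg (·.snd) hk).symm

lemma rot_zpow_unit_apply_ne [Fintype V] (S : G.EmbeddingScheme) (ε : ℤˣ) {d : G.Dart}
    (hd : 2 ≤ G.degree d.fst) : (S.rot ^ (ε : ℤ)) d ≠ d := by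
  rcases Int.units_eq_one_or ε with rfl | rfl
  · simpa using S.rot_apply_ne hd
  · rw [Units.val_neg, Units.val_one, zpow_neg, zpow_one]
    exact fun h => S.rot_apply_ne hd (Equiv.Perm.inv_eq_iff_eq.mp h).symm

lemma faceMap_fst_fst (S : G.EmbeddingScheme) (q : G.Dart × ℤˣ) :
    (S.faceMap q).1.fst = q.1.snd :=
  S.rot_zpow_fst _ q.1.symm

lemma faceMap_apply_ne (S : G.EmbeddingScheme) (q : G.Dart × ℤˣ) : S.faceMap q ≠ q := by
  intro h
  have := S.faceMap_fst_fst q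
  rw [h] at this
  exact q.1.adj.ne this

lemma faceMap_fst_ne_symm [Fintype V] (S : G.EmbeddingScheme) (hdeg : ∀ w, 2 ≤ G.degree w)
    (q : G.Dart × ℤˣ) : (S.faceMap q).1 ≠ q.1.symm :=
  S.rot_zpow_unit_apply_ne _ (hdeg _)

lemma exists_isCycle_length_le_of_faceMap_pow [Fintype V] (S : G.EmbeddingScheme)
    (hdeg : ∀ w, 2 ≤ G.degree w) {p : G.Dart × ℤˣ} {ℓ : ℕ} (hℓ : 0 < ℓ)
    (hp : (S.faceMap ^ ℓ) p = p) :
    ∃ (x : V) (c : G.Walk x x), c.IsCycle ∧ c.length ≤ ℓ := by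
  set d : ℕ → G.Dart := fun i => ((S.faceMap ^ i) p).1
  have hsucc : ∀ i, d (i + 1) = (S.faceMap ((S.faceMap ^ i) p)).1 := fun i => by
    simp only [d, pow_succ', Equiv.Perm.mul_apply]
  have hfst : ∀ i, (d (i + 1)).fst = (d i).snd := fun i => by
    rw [hsucc]
    exact S.faceMap_fst_fst _
  refine exists_isCycle_length_le_of_seq (a := fun i => (d i).fst)
    (fun i => hfst i ▸ (d i).adj) (fun i h => ?_) hℓ (by simp [d, hp])
  refine S.faceMap_fst_ne_symm hdeg ((S.faceMap ^ i) p) ?_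
  rw [← hsucc]
  exact Dart.ext _ _ (Prod.ext (hfst i) (hfst (i + 1) ▸ h))

lemma girth_le_of_mem_cycleType_faceMap [Fintype V] [DecidableEq V] (S : G.EmbeddingScheme)
    (hdeg : ∀ w, 2 ≤ G.degree w) {n : ℕ} (hn : n ∈ S.faceMap.cycleType) : G.girth ≤ n := by
  obtain ⟨p, -, hp⟩ := Equiv.Perm.exists_pow_apply_eq_self_of_mem_cycleType hn
  obtain ⟨x, c, hc, hlen⟩ := S.exists_isCycle_length_le_of_faceMap_pow hdeg
    (zero_lt_two.trans_le (Equiv.Perm.two_le_of_mem_cycleType hn)) hp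
  exact (G.girth_le_length hc).trans hlen

lemma girth_mul_numFaces_le [Fintype V] [DecidableEq V] (S : G.EmbeddingScheme)
    (hdeg : ∀ w, 2 ≤ G.degree w) : G.girth * S.numFaces ≤ 2 * #G.edgeFinset := by
  have hfix : (univ.filter fun q => S.faceMap q = q) = ∅ :=
    filter_eq_empty_iff.mpr fun q _ => S.faceMap_apply_ne q
  have hcycles : G.girth * Multiset.card S.faceMap.cycleType ≤ 4 * #G.edgeFinset := by
    calc G.girth * Multiset.card S.faceMap.cycleType
        ≤ S.faceMap.cycleType.sum := by
          rw [mul_comm, ← smul_eq_mul]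
          exact Multiset.card_nsmul_le_sum fun n hn =>
            S.girth_le_of_mem_cycleType_faceMap hdeg hn
      _ ≤ Fintype.card (G.Dart × ℤˣ) := S.faceMap.sum_cycleType_le
      _ = 4 * #G.edgeFinset := by
          rw [Fintype.card_prod, dart_card_eq_twice_card_edges, Fintype.card_units_int]
          ring
  have hfaces : 2 * S.numFaces ≤ Multiset.card S.faceMap.cycleType := by
    simpa [numFaces, permNumOrbits, hfix] using Nat.mul_div_le (permNumOrbits S.faceMap) 2
  have := Nat.mul_le_mul_left G.girth hfaces
  linarith

lemma not_isAcyclic [Fintype V] [DecidableEq V] [Nonempty V] (S : G.EmbeddingScheme)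
    (hdeg : ∀ w, 2 ≤ G.degree w) : ¬ G.IsAcyclic := by
  obtain ⟨w⟩ := ‹Nonempty V›
  obtain ⟨y, hy⟩ := (G.degree_pos_iff_exists_adj w).mp (by linarith [hdeg w])
  obtain ⟨x, c, hc, -⟩ := S.exists_isCycle_length_le_of_faceMap_pow hdeg
    (p := (⟨(w, y), hy⟩, 1)) (orderOf_pos S.faceMap) (by rw [pow_orderOf_eq_one]; rfl)
  exact fun h => h c hc

theorem averageDegree_le [Fintype V] [DecidableEq V] [Nonempty V] (S : G.EmbeddingScheme)
    (hdeg : ∀ w, 2 ≤ G.degree w) :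
    G.averageDegree ≤ 2 * G.girth / (G.girth - 2 : ℝ) * (1 - S.eulerChar / Fintype.card V) := by
  have hg : (3 : ℝ) ≤ G.girth := by exact_mod_cast three_le_girth (S.not_isAcyclic hdeg)
  have hf : (G.girth * S.numFaces : ℝ) ≤ 2 * #G.edgeFinset := by
    exact_mod_cast S.girth_mul_numFaces_le hdeg
  have hn : (0 : ℝ) < Fintype.card V := by exact_mod_cast Fintype.card_pos
  have hgap : 2 * G.girth / (G.girth - 2 : ℝ) * (1 - S.eulerChar / Fintype.card V) -
      G.averageDegree = 2 * (2 * #G.edgeFinset - G.girth * S.numFaces) /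
        ((G.girth - 2) * Fintype.card V) := by
    have : (G.girth - 2 : ℝ) ≠ 0 := by linarith
    rw [averageDegree, eulerChar]
    push_cast
    field_simp
    ring
  have : 0 ≤ 2 * (2 * #G.edgeFinset - G.girth * S.numFaces : ℝ) /
      ((G.girth - 2) * Fintype.card V) := by
    apply div_nonneg <;> nlinarith
  linarith

end SimpleGraph.EmbeddingScheme

namespace SimpleGraph

section AverageDegree

variable {V : Type*} [Fintype V] (G : SimpleGraph V) [DecidableRel G.Adj]

lemma exists_adj_adj_ne {w : V} (hw : 2 ≤ G.degree w) :
    ∃ v v', G.Adj w v ∧ G.Adj w v' ∧ v ≠ v' := by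
  obtain ⟨v, hv, v', hv', hvv'⟩ := one_lt_card.mp (G.card_neighborFinset_eq_degree w ▸ hw)
  exact ⟨v, v', (G.mem_neighborFinset _ _).mp hv, (G.mem_neighborFinset _ _).mp hv', hvv'⟩

lemma exists_adj_notMem {v : V} {s : Finset V} (h : #s < G.degree v) : ∃ y ∉ s, G.Adj v y := by
  obtain ⟨y, hy, hys⟩ := exists_mem_notMem_of_card_lt_card (s := s) (t := G.neighborFinset v)
    (by rwa [card_neighborFinset_eq_degree])
  exact ⟨y, hys, (G.mem_neighborFinset _ _).mp hy⟩

lemma sum_degree_sub_averageDegree [Nonempty V] :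
    ∑ w, ((G.degree w : ℝ) - G.averageDegree) = 0 := by
  have hn : (Fintype.card V : ℝ) ≠ 0 := by exact_mod_cast Fintype.card_ne_zero
  have hsum : ∑ w, (G.degree w : ℝ) = 2 * #G.edgeFinset := by
    exact_mod_cast G.sum_degrees_eq_twice_card_edges
  rw [sum_sub_distrib, hsum, sum_const, card_univ, nsmul_eq_mul, averageDegree]
  field_simp
  ring

section

variable {G} {t : ℝ}
  (hcherry : ∀ u v v', G.Adj u v → G.Adj u v' → v ≠ v' →
    2 * t + G.maxDegree < (G.degree u + G.degree v + G.degree v' : ℝ))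
include hcherry

lemma eq_of_adj_of_adj_of_degree_le {y w w' : V} (hw : (G.degree w : ℝ) ≤ t)
    (hw' : (G.degree w' : ℝ) ≤ t) (hyw : G.Adj y w) (hyw' : G.Adj y w') : w = w' := by
  by_contra hne
  have := hcherry y w w' hyw hyw' hne
  have : (G.degree y : ℝ) ≤ G.maxDegree := by exact_mod_cast G.degree_le_maxDegree y
  linarith

lemma two_le_card_filter_neighborFinset_degree_gt (hδ : ∀ w, 3 ≤ G.degree w) {w : V}
    (hw : (G.degree w : ℝ) ≤ t) :
    2 ≤ #{y ∈ G.neighborFinset w | (t + G.maxDegree) / 2 < (G.degree y : ℝ)} := by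
  have hlow : #{y ∈ G.neighborFinset w | ¬ (t + G.maxDegree) / 2 < (G.degree y : ℝ)} ≤ 1 := by
    refine card_le_one.mpr fun a ha b hb => ?_
    rw [mem_filter, mem_neighborFinset, not_lt] at ha hb
    by_contra hab
    linarith [hcherry w a b ha.1 hb.1 hab]
  have := card_filter_add_card_filter_not
    (s := G.neighborFinset w) (fun y => (t + G.maxDegree) / 2 < (G.degree y : ℝ))
  rw [card_neighborFinset_eq_degree] at this
  linarith [hδ w]

lemma minDegree_add_maxDegree_sub_le (hδ : ∀ w, 3 ≤ G.degree w) (htΔ : t ≤ G.maxDegree)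
    {w : V} (hw : (G.degree w : ℝ) ≤ t) :
    (G.minDegree + G.maxDegree : ℝ) - 2 * t ≤ ((G.degree w : ℝ) - t) +
      ∑ y ∈ G.neighborFinset w with (t + G.maxDegree) / 2 < (G.degree y : ℝ),
        ((G.degree y : ℝ) - t) := by
  have hmin : (G.minDegree : ℝ) ≤ G.degree w := by exact_mod_cast G.minDegree_le_degree w
  have hcard := two_le_card_filter_neighborFinset_degree_gt hcherry hδ hw
  calc (G.minDegree + G.maxDegree : ℝ) - 2 * t
      ≤ ((G.degree w : ℝ) - t) + 2 * ((G.maxDegree - t) / 2) := by linarith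
    _ ≤ ((G.degree w : ℝ) - t) + #{y ∈ G.neighborFinset w |
          (t + G.maxDegree) / 2 < (G.degree y : ℝ)} • ((G.maxDegree - t) / 2) := by
        rw [nsmul_eq_mul]
        gcongr
        exact_mod_cast hcard
    _ ≤ _ := by
        gcongr
        exact card_nsmul_le_sum _ _ _ fun y hy => by linarith [(mem_filter.mp hy).2]

lemma minDegree_add_maxDegree_le [Nonempty V] (hδ : ∀ w, 3 ≤ G.degree w)
    (ht : t = G.averageDegree) : (G.minDegree + G.maxDegree : ℝ) ≤ 2 * t := by
  classical
  by_contra! hlt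
  have htΔ : t < G.maxDegree := by
    obtain ⟨w⟩ := ‹Nonempty V›
    obtain ⟨v, v', hv, hv', hvv'⟩ := G.exists_adj_adj_ne (w := w) (by linarith [hδ w])
    have hΔ : ∀ x, (G.degree x : ℝ) ≤ G.maxDegree := fun x => by
      exact_mod_cast G.degree_le_maxDegree x
    linarith [hcherry w v v' hv hv' hvv', hΔ w, hΔ v, hΔ v']
  set L := univ.filter fun w => (G.degree w : ℝ) ≤ t
  set H := fun w => {y ∈ G.neighborFinset w | (t + G.maxDegree) / 2 < (G.degree y : ℝ)}
  have hzero : ∑ w, ((G.degree w : ℝ) - t) = 0 := ht ▸ G.sum_degree_sub_averageDegree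
  have hLne : L.Nonempty := by
    obtain ⟨w, -, hw⟩ := exists_le_of_sum_le (g := fun _ => (0 : ℝ)) univ_nonempty
      (by rw [hzero, sum_const_zero])
    exact ⟨w, mem_filter.mpr ⟨mem_univ w, by linarith⟩⟩
  have hpos : ∀ w ∈ L, 0 < ((G.degree w : ℝ) - t) + ∑ y ∈ H w, ((G.degree y : ℝ) - t) :=
    fun w hw => by
      linarith [minDegree_add_maxDegree_sub_le hcherry hδ htΔ.le (mem_filter.mp hw).2]
  -- the bundles `{w} ∪ H w` over `w ∈ L` are disjoint and carry positive charge `d - t` each,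
  -- yet the total charge is `0`
  have hsum := sum_add_sum_le_sum_of_pairwiseDisjoint (f := fun w => (G.degree w : ℝ) - t)
    (L := L) (H := H) ?_ ?_ ?_
  · linarith [sum_pos hpos hLne]
  · intro w hw w' hw' hne
    refine Finset.disjoint_left.mpr fun y hy hy' => hne ?_
    exact eq_of_adj_of_adj_of_degree_le hcherry (mem_filter.mp hw).2 (mem_filter.mp hw').2
      ((G.mem_neighborFinset _ _).mp (mem_filter.mp hy).1).symm
      ((G.mem_neighborFinset _ _).mp (mem_filter.mp hy').1).symm
  · exact fun w _ => Finset.disjoint_left.mpr fun y hyL hyH => by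
      linarith [(mem_filter.mp hyL).2, (mem_filter.mp hyH).2]
  · intro i hi
    have : t < G.degree i := by simpa [L] using hi
    linarith

end

theorem exists_adj_adj_degree_add_le [Nonempty V] (hδ : ∀ w, 3 ≤ G.degree w) :
    ∃ u v v', G.Adj u v ∧ G.Adj u v' ∧ v ≠ v' ∧
      (G.degree u + G.degree v + G.degree v' : ℝ) ≤ 2 * G.averageDegree + G.maxDegree := by
  by_contra! hcherry
  have hbound := minDegree_add_maxDegree_le hcherry hδ rfl
  obtain ⟨w, hw⟩ := G.exists_minimal_degree_vertex
  obtain ⟨v, v', hv, hv', hvv'⟩ := G.exists_adj_adj_ne (w := w) (by linarith [hδ w])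
  have hΔ : ∀ x, (G.degree x : ℝ) ≤ G.maxDegree := fun x => by
    exact_mod_cast G.degree_le_maxDegree x
  linarith [hcherry w v v' hv hv' hvv', hΔ v, hΔ v', congrArg (Nat.cast (R := ℝ)) hw]

end AverageDegree

section TotalRestrainedDomination

variable {V : Type*} {G G' : SimpleGraph V} {S : Finset V} {u v v' : V}

lemma IsTotalRestrainedDominatingSet.mem_of_neighborSet_eq
    (hS : G.IsTotalRestrainedDominatingSet S) (hv : G.neighborSet v = {u}) : u ∈ S ∧ v ∈ S := by
  have hadj : ∀ y, G.Adj y v → y = u := fun y hy => by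
    simpa [hv] using (G.mem_neighborSet v y).mpr hy.symm
  obtain ⟨y, hyS, hy⟩ := hS.1 v
  obtain rfl := hadj y hy
  refine ⟨hyS, by_contra fun hvS => ?_⟩
  obtain ⟨z, hzS, hz⟩ := hS.2 v hvS
  exact hzS (hadj z hz ▸ hyS)

lemma IsTotalRestrainedDominatingSet.erase [DecidableEq V] (hle : G' ≤ G)
    (hS : G'.IsTotalRestrainedDominatingSet S) (hv : G'.neighborSet v = {u}) (hv'S : v' ∈ S)
    (hv'v : v' ≠ v) (hv'u : G.Adj v' u) (hy : ∃ y ∉ S, G.Adj y v) :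
    G.IsTotalRestrainedDominatingSet (S.erase v) := by
  refine ⟨fun w => ?_, fun w hw => ?_⟩
  · obtain ⟨s, hs, hsw⟩ := hS.1 w
    by_cases hsv : s = v
    · subst hsv
      obtain rfl : w = u := by simpa [hv] using (G'.mem_neighborSet s w).mpr hsw
      exact ⟨v', mem_erase.mpr ⟨hv'v, hv'S⟩, hv'u⟩
    · exact ⟨s, mem_erase.mpr ⟨hsv, hs⟩, hle hsw⟩
  · by_cases hwv : w = v
    · obtain ⟨y, hyS, hyv⟩ := hy
      exact ⟨y, fun h => hyS (mem_of_mem_erase h), hwv ▸ hyv⟩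
    · obtain ⟨y, hyS, hyw⟩ := hS.2 w fun hwS => hw (mem_erase.mpr ⟨hwv, hwS⟩)
      exact ⟨y, fun h => hyS (mem_of_mem_erase h), hle hyw⟩

lemma IsTotalRestrainedDominatingSet.erase_erase [DecidableEq V] (hle : G' ≤ G)
    (hS : G'.IsTotalRestrainedDominatingSet S) (hu : G'.neighborSet u = {v, v'})
    (hv' : G'.neighborSet v' = {u}) (hvS : v ∈ S) (hvu : v ≠ u) (hvv' : v ≠ v')
    (hb : ∃ b ∈ (S.erase u).erase v', G.Adj b v) (hb' : ∃ b ∈ (S.erase u).erase v', G.Adj b v') :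
    G.IsTotalRestrainedDominatingSet ((S.erase u).erase v') := by
  have huv : G.Adj u v := hle (by simp [← mem_neighborSet, hu])
  have huv' : G.Adj u v' := hle (by simp [← mem_neighborSet, hu])
  refine ⟨fun w => ?_, fun w hw => ?_⟩
  · obtain ⟨s, hs, hsw⟩ := hS.1 w
    by_cases hsu : s = u
    · subst hsu
      rcases (show w = v ∨ w = v' by simpa [hu] using (G'.mem_neighborSet s w).mpr hsw)
        with rfl | rfl
      exacts [hb, hb']
    by_cases hsv' : s = v'
    · subst hsv'
      obtain rfl : w = u := by simpa [hv'] using (G'.mem_neighborSet s w).mpr hsw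
      exact ⟨v, mem_erase.mpr ⟨hvv', mem_erase.mpr ⟨hvu, hvS⟩⟩, huv.symm⟩
    exact ⟨s, mem_erase.mpr ⟨hsv', mem_erase.mpr ⟨hsu, hs⟩⟩, hle hsw⟩
  · by_cases hwu : w = u
    · exact ⟨v', by simp, hwu ▸ huv'.symm⟩
    by_cases hwv' : w = v'
    · exact ⟨u, by simp, hwv' ▸ huv'⟩
    obtain ⟨y, hyS, hyw⟩ :=
      hS.2 w fun hwS => hw (mem_erase.mpr ⟨hwv', mem_erase.mpr ⟨hwu, hwS⟩⟩)
    exact ⟨y, fun h => hyS (mem_of_mem_erase (mem_of_mem_erase h)), hle hyw⟩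

lemma IsTotalRestrainedDominatingSet.totalRestrainedDominationNumber_le
    (hS : G.IsTotalRestrainedDominatingSet S) : G.totalRestrainedDominationNumber ≤ #S :=
  Nat.sInf_le (s := {k | ∃ S, G.IsTotalRestrainedDominatingSet S ∧ #S = k}) ⟨S, hS, rfl⟩

lemma exists_isTotalRestrainedDominatingSet_card_eq [Fintype V] (h : ∀ w, ∃ y, G.Adj y w) :
    ∃ S, G.IsTotalRestrainedDominatingSet S ∧ #S = G.totalRestrainedDominationNumber :=
  Nat.sInf_mem (s := {k | ∃ S, G.IsTotalRestrainedDominatingSet S ∧ #S = k})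
    ⟨_, univ, ⟨fun w => (h w).imp fun y hy => ⟨mem_univ y, hy⟩,
      fun w hw => absurd (mem_univ w) hw⟩, rfl⟩

theorem totalRestrainedDominationNumber_lt [Fintype V] [DecidableEq V] [DecidableRel G.Adj]
    (hle : G' ≤ G) (hiso : ∀ w, ∃ y, G'.Adj y w) (hu : G'.neighborSet u = {v, v'})
    (hv : G'.neighborSet v = {u}) (hv' : G'.neighborSet v' = {u}) (hvv' : v ≠ v')
    (hdv : 3 ≤ G.degree v) (hdv' : 3 ≤ G.degree v') :
    G.totalRestrainedDominationNumber < G'.totalRestrainedDominationNumber := by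
  obtain ⟨S, hS, hcard⟩ := exists_isTotalRestrainedDominatingSet_card_eq hiso
  obtain ⟨huS, hvS⟩ := hS.mem_of_neighborSet_eq hv
  obtain ⟨-, hv'S⟩ := hS.mem_of_neighborSet_eq hv'
  have huv : G'.Adj u v := by simp [← mem_neighborSet, hu]
  have huv' : G'.Adj u v' := by simp [← mem_neighborSet, hu]
  suffices ∃ T, G.IsTotalRestrainedDominatingSet T ∧ #T < #S by
    obtain ⟨T, hT, hTS⟩ := this
    exact hcard ▸ hT.totalRestrainedDominationNumber_le.trans_lt hTS
  by_cases hy : ∃ y ∉ S, G.Adj y v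
  · exact ⟨S.erase v, hS.erase hle hv hv'S hvv'.symm (hle huv').symm hy, card_erase_lt_of_mem hvS⟩
  by_cases hy' : ∃ y ∉ S, G.Adj y v'
  · exact ⟨S.erase v', hS.erase hle hv' hvS hvv' (hle huv).symm hy', card_erase_lt_of_mem hv'S⟩
  -- now all neighbours of `v` and `v'` lie in `S`, so both stay dominated without `u` and `v'`
  have hnbr : ∀ {x}, 3 ≤ G.degree x → (¬ ∃ y ∉ S, G.Adj y x) →
      ∃ b ∈ (S.erase u).erase v', G.Adj b x := fun {x} hdx hx => by
    obtain ⟨b, hb, hxb⟩ := G.exists_adj_notMem (s := {u, v'}) (card_le_two.trans_lt hdx)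
    have hbS : b ∈ S := by_contra fun hbS => hx ⟨b, hbS, hxb.symm⟩
    simp only [mem_insert, mem_singleton, not_or] at hb
    exact ⟨b, mem_erase.mpr ⟨hb.2, mem_erase.mpr ⟨hb.1, hbS⟩⟩, hxb.symm⟩
  refine ⟨(S.erase u).erase v', hS.erase_erase hle hu hv' hvS huv.ne.symm hvv'
    (hnbr hdv hy) (hnbr hdv' hy'), ?_⟩
  calc #((S.erase u).erase v') < #(S.erase u) :=
        card_erase_lt_of_mem (mem_erase.mpr ⟨huv'.ne.symm, hv'S⟩)
    _ ≤ #S := card_erase_le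

end TotalRestrainedDomination

section CherryCut

variable {V : Type*} [Fintype V] [DecidableEq V] (G : SimpleGraph V) [DecidableRel G.Adj]
  {u v v' : V}

/-- Deleting these edges turns the path `v u v'` into a connected component. -/
def cherryCut (u v v' : V) : Finset (Sym2 V) :=
  (G.incidenceFinset u ∪ G.incidenceFinset v ∪ G.incidenceFinset v') \ {s(u, v), s(u, v')}

lemma mem_cherryCut {e : Sym2 V} : e ∈ G.cherryCut u v v' ↔
    e ∈ G.edgeSet ∧ (u ∈ e ∨ v ∈ e ∨ v' ∈ e) ∧ e ≠ s(u, v) ∧ e ≠ s(u, v') := by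
  simp only [cherryCut, mem_sdiff, mem_union, mem_insert, mem_singleton, mem_incidenceFinset,
    incidenceSet, Set.mem_ofPred_eq]
  tauto

lemma coe_cherryCut_subset_edgeSet : (G.cherryCut u v v' : Set (Sym2 V)) ⊆ G.edgeSet :=
  fun _ he => (G.mem_cherryCut.mp he).1

lemma deleteEdges_cherryCut_adj {a b : V} :
    (G.deleteEdges (G.cherryCut u v v')).Adj a b ↔ G.Adj a b ∧
      (s(a, b) = s(u, v) ∨ s(a, b) = s(u, v') ∨ (u ∉ s(a, b) ∧ v ∉ s(a, b) ∧ v' ∉ s(a, b))) := by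
  rw [deleteEdges_adj, mem_coe, mem_cherryCut, mem_edgeSet]
  tauto

variable {G}

lemma neighborSet_deleteEdges_cherryCut_center (huv : G.Adj u v) (huv' : G.Adj u v') :
    (G.deleteEdges (G.cherryCut u v v')).neighborSet u = {v, v'} := by
  ext w
  simp only [mem_neighborSet, deleteEdges_cherryCut_adj, Sym2.congr_right, Sym2.mem_mk_left,
    not_true_eq_false, false_and, or_false, Set.mem_insert_iff, Set.mem_singleton_iff]
  constructor
  · exact fun h => h.2
  · rintro (rfl | rfl) <;> simp [*]

lemma neighborSet_deleteEdges_cherryCut_left (huv : G.Adj u v) (hvv' : v ≠ v') :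
    (G.deleteEdges (G.cherryCut u v v')).neighborSet v = {u} := by
  ext w
  simp only [mem_neighborSet, deleteEdges_cherryCut_adj, Sym2.eq_iff, Sym2.mem_mk_left,
    not_true_eq_false, false_and, and_false, or_false, false_or, true_and,
    Set.mem_singleton_iff, hvv', huv.ne.symm]
  constructor
  · exact fun h => h.2
  · rintro rfl
    simp [huv.symm]

lemma cherryCut_comm : G.cherryCut u v v' = G.cherryCut u v' v := by
  ext e
  simp only [mem_cherryCut]
  tauto

lemma exists_deleteEdges_cherryCut_adj (hδ : ∀ w, 4 ≤ G.degree w) (huv : G.Adj u v)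
    (huv' : G.Adj u v') (w : V) : ∃ y, (G.deleteEdges (G.cherryCut u v v')).Adj y w := by
  by_cases hw : w ∈ ({u, v, v'} : Finset V)
  · simp only [mem_insert, mem_singleton] at hw
    rcases hw with rfl | rfl | rfl
    · exact ⟨v, (deleteEdges_cherryCut_adj G).mpr ⟨huv.symm, Or.inl Sym2.eq_swap⟩⟩
    · exact ⟨u, (deleteEdges_cherryCut_adj G).mpr ⟨huv, Or.inl rfl⟩⟩
    · exact ⟨u, (deleteEdges_cherryCut_adj G).mpr ⟨huv', Or.inr (Or.inl rfl)⟩⟩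
  · obtain ⟨y, hy, hwy⟩ := G.exists_adj_notMem (card_le_three.trans_lt (hδ w))
    simp only [mem_insert, mem_singleton, not_or] at hw hy
    refine ⟨y, (deleteEdges_cherryCut_adj G).mpr ⟨hwy.symm, Or.inr (Or.inr ?_)⟩⟩
    simp only [Sym2.mem_iff, not_or]
    exact ⟨⟨Ne.symm hy.1, Ne.symm hw.1⟩, ⟨Ne.symm hy.2.1, Ne.symm hw.2.1⟩,
      ⟨Ne.symm hy.2.2, Ne.symm hw.2.2⟩⟩

lemma card_cherryCut_add_four_le (huv : G.Adj u v) (huv' : G.Adj u v') (hvv' : v ≠ v') :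
    #(G.cherryCut u v v') + 4 ≤ G.degree u + G.degree v + G.degree v' := by
  have h₁ : s(u, v) ∈ G.incidenceFinset u ∩ G.incidenceFinset v := by
    simp [mem_incidenceFinset, incidenceSet, huv]
  have h₂ : s(u, v') ∈ (G.incidenceFinset u ∪ G.incidenceFinset v) ∩ G.incidenceFinset v' := by
    simp [mem_incidenceFinset, incidenceSet, huv']
  have hsub : {s(u, v), s(u, v')} ⊆
      G.incidenceFinset u ∪ G.incidenceFinset v ∪ G.incidenceFinset v' := by
    simp only [insert_subset_iff, singleton_subset_iff]
    exact ⟨mem_union_left _ (mem_union_left _ (mem_inter.mp h₁).1), (mem_inter.mp h₂).2 |>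
      mem_union_right _⟩
  have hpair : #{s(u, v), s(u, v')} = 2 := card_pair fun h => hvv' (Sym2.congr_right.mp h)
  have h₃ := card_union_add_card_inter (G.incidenceFinset u) (G.incidenceFinset v)
  have h₄ := card_union_add_card_inter (G.incidenceFinset u ∪ G.incidenceFinset v)
    (G.incidenceFinset v')
  have h₅ := card_pos.mpr ⟨_, h₁⟩
  have h₆ := card_pos.mpr ⟨_, h₂⟩
  have h₇ := card_le_card hsub
  rw [hpair] at h₇
  rw [cherryCut, card_sdiff_of_subset hsub, hpair]
  simp only [card_incidenceFinset_eq_degree] at h₃ h₄ ⊢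
  omega

end CherryCut

section TotalRestrainedBondage

variable {V : Type*} [Fintype V] [DecidableEq V] {G : SimpleGraph V} [DecidableRel G.Adj]

theorem exists_totalRestrainedBondageNumber_eq_le (hδ : ∀ w, 4 ≤ G.degree w) {u v v' : V}
    (huv : G.Adj u v) (huv' : G.Adj u v') (hvv' : v ≠ v') :
    ∃ b : ℕ, G.totalRestrainedBondageNumber = b ∧
      b + 4 ≤ G.degree u + G.degree v + G.degree v' := by
  have hiso := exists_deleteEdges_cherryCut_adj hδ huv huv'
  have hv' : (G.deleteEdges (G.cherryCut u v v')).neighborSet v' = {u} := by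
    rw [cherryCut_comm]
    exact neighborSet_deleteEdges_cherryCut_left huv' hvv'.symm
  have hlt := totalRestrainedDominationNumber_lt (G.deleteEdges_le _) hiso
    (neighborSet_deleteEdges_cherryCut_center huv huv')
    (neighborSet_deleteEdges_cherryCut_left huv hvv') hv' hvv' (by linarith [hδ v])
    (by linarith [hδ v'])
  have hle : G.totalRestrainedBondageNumber ≤ #(G.cherryCut u v v') :=
    sInf_le ⟨_, G.coe_cherryCut_subset_edgeSet, rfl, hiso, hlt⟩
  obtain ⟨b, hb, hbF⟩ := ENat.le_natCast_iff.mp hle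
  exact ⟨b, hb, by linarith [card_cherryCut_add_four_le huv huv' hvv']⟩

theorem exists_totalRestrainedBondageNumber_eq_le_averageDegree [Nonempty V]
    (hδ : ∀ w, 4 ≤ G.degree w) :
    ∃ b : ℕ, G.totalRestrainedBondageNumber = b ∧
      (b : ℝ) ≤ 2 * G.averageDegree + G.maxDegree - 4 := by
  obtain ⟨u, v, v', huv, huv', hvv', hsum⟩ :=
    G.exists_adj_adj_degree_add_le fun w => (hδ w).trans' (by norm_num)
  obtain ⟨b, hb, hb4⟩ := exists_totalRestrainedBondageNumber_eq_le hδ huv huv' hvv'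
  refine ⟨b, hb, ?_⟩
  have : ((b + 4 : ℕ) : ℝ) ≤ (G.degree u + G.degree v + G.degree v' : ℕ) := by exact_mod_cast hb4
  push_cast at this
  linarith

end TotalRestrainedBondage

end SimpleGraph

theorem statement_14_general {V : Type*} [Fintype V] [DecidableEq V] (G : SimpleGraph V)
    [DecidableRel G.Adj] (hδ : 4 ≤ G.minDegree) (χ : ℤ)
    (hemb : ∃ S : G.EmbeddingScheme, S.eulerChar = χ)
    (g : ℕ) (hg : G.girth = (g : ℕ∞)) :
    ∃ b : ℕ, G.totalRestrainedBondageNumber = (b : ℕ∞) ∧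
      (b : ℝ) ≤ (4 * (g : ℝ) / ((g : ℝ) - 2)) * (1 - (χ : ℝ) / (Fintype.card V : ℝ)) +
          (G.maxDegree : ℝ) - 4 ∧
      (4 * (g : ℝ) / ((g : ℝ) - 2)) * (1 - (χ : ℝ) / (Fintype.card V : ℝ)) +
          (G.maxDegree : ℝ) - 4 ≤
        -12 * (χ : ℝ) / (Fintype.card V : ℝ) + (G.maxDegree : ℝ) + 8 := by
  have hdeg : ∀ w, 4 ≤ G.degree w := fun w => hδ.trans (G.minDegree_le_degree w)
  have hdeg2 : ∀ w, 2 ≤ G.degree w := fun w => (hdeg w).trans' (by norm_num)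
  have : Nonempty V := by
    by_contra h
    rw [not_nonempty_iff] at h
    rw [minDegree_of_subsingleton] at hδ
    omega
  obtain ⟨S, rfl⟩ := hemb
  replace hg : G.girth = g := by exact_mod_cast hg
  have hg3 : (3 : ℝ) ≤ g := by exact_mod_cast hg ▸ three_le_girth (S.not_isAcyclic hdeg2)
  obtain ⟨b, hb, hbondage⟩ := exists_totalRestrainedBondageNumber_eq_le_averageDegree hdeg
  have had := S.averageDegree_le hdeg2
  rw [hg] at had
  set x := 1 - (S.eulerChar : ℝ) / Fintype.card V with hx
  have hcoef : 4 * (g : ℝ) / (g - 2) ≤ 12 := by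
    rw [div_le_iff₀ (by linarith)]
    linarith
  have hx0 : 0 ≤ x := nonneg_of_mul_nonneg_right
    ((by unfold averageDegree; positivity : (0 : ℝ) ≤ G.averageDegree).trans had)
    (by apply div_pos <;> linarith)
  have hdouble : 4 * (g : ℝ) / (g - 2) * x = 2 * (2 * g / (g - 2) * x) := by ring
  refine ⟨b, hb, by linarith, ?_⟩
  have h12 : -12 * (S.eulerChar : ℝ) / Fintype.card V + 12 = 12 * x := by
    rw [hx]
    ring
  linarith [mul_le_mul_of_nonneg_right hcoef hx0]

/-- bound on the total restrained bondage number via girth and the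
largest Euler characteristic of a surface on which `G` is embeddable. -/
theorem statement_14 {V : Type*} [Fintype V] [DecidableEq V] (G : SimpleGraph V)
    [DecidableRel G.Adj] (hconn : G.Connected) (hδ : 4 ≤ G.minDegree)
    (hcard : 5 ≤ Fintype.card V) (χ : ℤ)
    (hemb : ∃ S : G.EmbeddingScheme, S.eulerChar = χ)
    (hmax : ∀ S : G.EmbeddingScheme, S.eulerChar ≤ χ)
    (g : ℕ) (hg : G.girth = (g : ℕ∞)) :
    ∃ b : ℕ, G.totalRestrainedBondageNumber = (b : ℕ∞) ∧
      (b : ℝ) ≤ (4 * (g : ℝ) / ((g : ℝ) - 2)) * (1 - (χ : ℝ) / (Fintype.card V : ℝ)) +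
          (G.maxDegree : ℝ) - 4 ∧
      (4 * (g : ℝ) / ((g : ℝ) - 2)) * (1 - (χ : ℝ) / (Fintype.card V : ℝ)) +
          (G.maxDegree : ℝ) - 4 ≤
        -12 * (χ : ℝ) / (Fintype.card V : ℝ) + (G.maxDegree : ℝ) + 8 :=
  statement_14_general G hδ χ hemb g hg
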